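/- arXiv:2307.01356 — 2 statements merged into one kernel-verified Lean document; each statement's English description precedes it below -/
import Mathlib

section
/- The $2\times 2$ matrix $A^{(1)} = \begin{pmatrix} \frac{1-2p}{1-p} & \frac{p}{1-p} \\ 1 & 0 \end{pmatrix}$, acting on $L^2(\{0,1\}, \mu_p)$, has the $p$-biased characters $1$ and $\chi_{\{1\}}(x) = \frac{x-p}{\sqrt{p(1-p)}}$ as eigenfunctions with eigenvalues $1$ and $-\frac{p}{1-p}$ respectively; moreover its $n$-fold tensor power $A^{(n)}$ satisfies $A^{(n)}_{S,T} = 0$ whenever $S \cap T \neq \emptyset$ (identifying $\{0,1\}^n$ with subsets of $[n]$). -/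
open Finset

/-- The Friedgut pseudo-disjointness matrix `A^{(1)}` on `{0,1}`, with rows/columns
indexed by `Bool` (`false ↔ ∅`, `true ↔ {1}`). -/
noncomputable def Amat (p : ℝ) : Bool → Bool → ℝ :=
  fun a b =>
    match a, b with
    | false, false => (1 - 2 * p) / (1 - p)
    | false, true => p / (1 - p)
    | true, false => 1
    | true, true => 0

/-- The `p`-biased character on one coordinate: `χ(x) = (x - p)/√(p(1-p))`. -/
noncomputable def chi1 (p : ℝ) : Bool → ℝ :=
  fun b => ((if b then 1 else 0) - p) / Real.sqrt (p * (1 - p))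

theorem Amat_row_sum {p : ℝ} (hp : p ≠ 1) (a : Bool) : ∑ b, Amat p a b = 1 := by
  have h : 1 - p ≠ 0 := sub_ne_zero.mpr hp.symm
  cases a <;> simp only [Fintype.sum_bool, Amat] <;> field_simp <;> ring

theorem Amat_sum_mul_centered {p : ℝ} (hp : p ≠ 1) (a : Bool) :
    ∑ b, Amat p a b * ((if b then 1 else 0) - p) =
      -(p / (1 - p)) * ((if a then 1 else 0) - p) := by
  have h : 1 - p ≠ 0 := sub_ne_zero.mpr hp.symm
  cases a <;> simp only [Fintype.sum_bool, Amat, if_true, if_false, Bool.false_eq_true] <;>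
    field_simp <;> ring

theorem Amat_sum_mul_chi1 {p : ℝ} (hp : p ≠ 1) (a : Bool) :
    ∑ b, Amat p a b * chi1 p b = -(p / (1 - p)) * chi1 p a := by
  simp only [chi1, mul_div_assoc', ← Finset.sum_div, Amat_sum_mul_centered hp]

theorem prod_Amat_eq_zero_of_inter {n : ℕ} (p : ℝ) {x y : Fin n → Bool}
    (h : ∃ i, x i = true ∧ y i = true) : ∏ i, Amat p (x i) (y i) = 0 := by
  obtain ⟨i, hx, hy⟩ := h
  exact Finset.prod_eq_zero (Finset.mem_univ i) (by rw [hx, hy]; rfl)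

theorem Amat_eigen_and_pseudo_disjoint_general (p : ℝ) (hp1 : p < 1) :
    (∀ a : Bool, ∑ b : Bool, Amat p a b * 1 = 1) ∧
    (∀ a : Bool, ∑ b : Bool, Amat p a b * chi1 p b = -(p / (1 - p)) * chi1 p a) ∧
    (∀ (n : ℕ) (x y : Fin n → Bool), (∃ i, x i = true ∧ y i = true) →
      ∏ i, Amat p (x i) (y i) = 0) := by
  have hp : p ≠ 1 := hp1.ne
  refine ⟨fun a => ?_, Amat_sum_mul_chi1 hp, fun n x y => prod_Amat_eq_zero_of_inter p⟩
  simpa only [mul_one] using Amat_row_sum hp a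

/-- `A^{(1)}` has the constant function `1` and the `p`-biased character `χ` as
eigenfunctions, with eigenvalues `1` and `-p/(1-p)` respectively; and its `n`-fold
tensor power vanishes on intersecting pairs. -/
theorem Amat_eigen_and_pseudo_disjoint (p : ℝ) (hp0 : 0 < p) (hp1 : p < 1) :
    (∀ a : Bool, ∑ b : Bool, Amat p a b * 1 = 1) ∧
    (∀ a : Bool, ∑ b : Bool, Amat p a b * chi1 p b = -(p / (1 - p)) * chi1 p a) ∧
    (∀ (n : ℕ) (x y : Fin n → Bool), (∃ i, x i = true ∧ y i = true) →
      ∏ i, Amat p (x i) (y i) = 0) :=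
  Amat_eigen_and_pseudo_disjoint_general p hp1
end

section
/- Let $2 \leq k, n \in \mathbb{N}$ and set $p = \frac{\log n}{k}$ (assume $p \leq 1$). Then $(1 - (1-p)^k)^n \geq 1/4$; consequently, for any $\mathcal{A} \subseteq [k]^n$ with up-closed embedding $\mathcal{B} \subseteq \{0,1\}^{kn}$ as above, $\frac{|\mathcal{A}|}{k^n} \leq 4\,\mu_p(\mathcal{B})$. -/
open Finset

/-- The `p`-biased product measure on `({0,1}^k)^n`. -/
noncomputable def mupB (p : ℝ) {k n : ℕ} (x : Fin n → Fin k → Bool) : ℝ :=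
  ∏ i, ∏ j, if x i j then p else 1 - p

/-- The embedding `Ã` of `𝒜 ⊆ [k]^n` into `({0,1}^k)^n` by tuples of singletons. -/
def tildeEmb {k n : ℕ} (A : Finset (Fin n → Fin k)) : Set (Fin n → Fin k → Bool) :=
  {S | ∃ z ∈ A, ∀ i j, S i j = decide (j = z i)}

/-- The up-closure of a family in `({0,1}^k)^n` (coordinatewise). -/
def upClosure {k n : ℕ} (T : Set (Fin n → Fin k → Bool)) : Set (Fin n → Fin k → Bool) :=
  {x | ∃ y ∈ T, ∀ i j, y i j = true → x i j = true}

open Classical in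
/-- The `μ_p`-measure of a family in `({0,1}^k)^n`. -/
noncomputable def muSet (p : ℝ) {k n : ℕ} (B : Set (Fin n → Fin k → Bool)) : ℝ :=
  ∑ x, if x ∈ B then mupB p x else 0

/-!
Sample `x ∼ μ_p` and, in every block of `x` that contains a `1`, pick one of its `1`s
uniformly at random. By symmetry between the `k` positions of a block, the resulting tuple
`z ∈ [k]^n` is uniformly distributed on the event that every block is nonempty, which has
probability `(1 - (1-p)^k)^n`; and `x ∈ ℬ` whenever `z ∈ 𝒜`. Hence
`μ_p(ℬ) ≥ (1 - (1-p)^k)^n |𝒜| / k^n`. For `p = log n / k` we have `(1-p)^k ≤ e^{-pk} = 1/n`,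
and `(1 - 1/n)^n ≥ 1/4` because `1 - t ≥ 4^{-t}` on `[0, 1/2]` by convexity.
-/

open Real

section Block

variable {α : Type*} [Fintype α]

noncomputable def blockProb (p : ℝ) (v : α → Bool) : ℝ :=
  ∏ j, if v j then p else 1 - p

/-- The law of the position chosen uniformly among the `1`s of `v` (zero if `v` has none). -/
noncomputable def selectWeight (v : α → Bool) (j : α) : ℝ :=
  if v j then (#{i | v i} : ℝ)⁻¹ else 0

theorem blockProb_nonneg {p : ℝ} (h0 : 0 ≤ p) (h1 : p ≤ 1) (v : α → Bool) :
    0 ≤ blockProb p v :=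
  prod_nonneg fun j _ => by split <;> linarith

theorem sum_blockProb [DecidableEq α] (p : ℝ) : ∑ v : α → Bool, blockProb p v = 1 := by
  calc ∑ v : α → Bool, blockProb p v = ∏ _j : α, ∑ b : Bool, if b then p else 1 - p := by
        rw [Fintype.prod_sum]; rfl
    _ = 1 := by simp

theorem blockProb_comp_equiv (p : ℝ) (v : α → Bool) (e : α ≃ α) :
    blockProb p (v ∘ e) = blockProb p v :=
  e.prod_comp fun j => if v j then p else 1 - p

theorem selectWeight_nonneg (v : α → Bool) (j : α) : 0 ≤ selectWeight v j := by
  unfold selectWeight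
  split <;> positivity

theorem selectWeight_comp_equiv (v : α → Bool) (e : α ≃ α) (j : α) :
    selectWeight (v ∘ e) j = selectWeight v (e j) := by
  have hcard : #{i | v (e i)} = #{i | v i} := card_equiv e (by simp)
  simp [selectWeight, hcard]

theorem sum_selectWeight (v : α → Bool) :
    ∑ j, selectWeight v j = if v = fun _ => false then 0 else 1 := by
  simp only [selectWeight, sum_ite, sum_const_zero, add_zero, sum_const, nsmul_eq_mul]
  split_ifs with hv
  · simp [hv]
  · have hne : (#{i | v i} : ℝ) ≠ 0 := by
      simpa [filter_eq_empty_iff, funext_iff] using hv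
    exact mul_inv_cancel₀ hne

theorem sum_blockProb_mul_selectWeight_apply_equiv [DecidableEq α] (p : ℝ) (e : α ≃ α)
    (j : α) :
    ∑ v, blockProb p v * selectWeight v (e j) = ∑ v, blockProb p v * selectWeight v j := by
  calc ∑ v, blockProb p v * selectWeight v (e j)
      = ∑ v, blockProb p (v ∘ e) * selectWeight (v ∘ e) j := by
        simp only [blockProb_comp_equiv, selectWeight_comp_equiv]
    _ = ∑ v, blockProb p v * selectWeight v j :=
        (e.symm.arrowCongr (Equiv.refl Bool)).sum_comp fun v => blockProb p v * selectWeight v j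

theorem sum_blockProb_mul_selectWeight [DecidableEq α] (p : ℝ) (j : α) :
    ∑ v, blockProb p v * selectWeight v j =
      (1 - (1 - p) ^ Fintype.card α) / Fintype.card α := by
  have hsymm (i : α) : ∑ v, blockProb p v * selectWeight v i =
      ∑ v, blockProb p v * selectWeight v j := by
    have h := sum_blockProb_mul_selectWeight_apply_equiv p (Equiv.swap j i) j
    rwa [Equiv.swap_apply_left] at h
  have htotal : ∑ i, ∑ v : α → Bool, blockProb p v * selectWeight v i =
      1 - (1 - p) ^ Fintype.card α := by
    have hsplit (v : α → Bool) : blockProb p v * ∑ i, selectWeight v i =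
        blockProb p v - if v = fun _ => false then blockProb p v else 0 := by
      rw [sum_selectWeight]
      split_ifs <;> ring
    rw [sum_comm]
    simp_rw [← mul_sum, hsplit, sum_sub_distrib, sum_ite_eq', mem_univ, if_true, sum_blockProb]
    simp [blockProb]
  have : Nonempty α := ⟨j⟩
  rw [eq_div_iff (Nat.cast_ne_zero.2 Fintype.card_ne_zero), ← htotal]
  simp [hsymm, mul_comm]

end Block

theorem sum_prod_selectWeight_le_one {ι α : Type*} [Fintype ι] [DecidableEq ι] [Fintype α]
    (x : ι → α → Bool) : ∑ z : ι → α, ∏ i, selectWeight (x i) (z i) ≤ 1 := by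
  rw [← Fintype.prod_sum]
  refine prod_le_one (fun i _ => sum_nonneg fun j _ => selectWeight_nonneg _ _) fun i _ => ?_
  rw [sum_selectWeight]
  split <;> norm_num

section Embedding

variable {k n : ℕ}

theorem mupB_eq_prod_blockProb (p : ℝ) (x : Fin n → Fin k → Bool) :
    mupB p x = ∏ i, blockProb p (x i) :=
  rfl

theorem mupB_nonneg {p : ℝ} (h0 : 0 ≤ p) (h1 : p ≤ 1) (x : Fin n → Fin k → Bool) :
    0 ≤ mupB p x :=
  prod_nonneg fun i _ => blockProb_nonneg h0 h1 (x i)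

theorem sum_mupB_mul_prod_selectWeight (p : ℝ) (z : Fin n → Fin k) :
    ∑ x, mupB p x * ∏ i, selectWeight (x i) (z i) = ((1 - (1 - p) ^ k) / k) ^ n := by
  simp_rw [mupB_eq_prod_blockProb, ← prod_mul_distrib]
  rw [← Fintype.prod_sum fun i v => blockProb p v * selectWeight v (z i)]
  simp [sum_blockProb_mul_selectWeight, div_pow]

theorem mem_upClosure_tildeEmb {A : Finset (Fin n → Fin k)} {x : Fin n → Fin k → Bool}
    {z : Fin n → Fin k} (hz : z ∈ A) (hx : ∀ i, x i (z i) = true) :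
    x ∈ upClosure (tildeEmb A) := by
  refine ⟨fun i j => decide (j = z i), ⟨z, hz, fun _ _ => rfl⟩, fun i j hij => ?_⟩
  rw [of_decide_eq_true hij]
  exact hx i

open Classical in
theorem sum_prod_selectWeight_le_indicator (A : Finset (Fin n → Fin k))
    (x : Fin n → Fin k → Bool) :
    ∑ z ∈ A, ∏ i, selectWeight (x i) (z i) ≤
      if x ∈ upClosure (tildeEmb A) then 1 else 0 := by
  split_ifs with hx
  · exact (sum_le_univ_sum_of_nonneg fun z => prod_nonneg fun i _ => selectWeight_nonneg _ _).trans
      (sum_prod_selectWeight_le_one x)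
  · refine (sum_eq_zero fun z hz => ?_).le
    obtain ⟨i, hi⟩ : ∃ i, x i (z i) ≠ true := by
      by_contra! h
      exact hx (mem_upClosure_tildeEmb hz h)
    exact prod_eq_zero (mem_univ i) (if_neg hi)

theorem card_mul_le_muSet {p : ℝ} (h0 : 0 ≤ p) (h1 : p ≤ 1) (A : Finset (Fin n → Fin k)) :
    #A * ((1 - (1 - p) ^ k) / k) ^ n ≤ muSet p (upClosure (tildeEmb A)) := by
  classical
  calc (#A : ℝ) * ((1 - (1 - p) ^ k) / k) ^ n
      = ∑ z ∈ A, ∑ x, mupB p x * ∏ i, selectWeight (x i) (z i) := by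
        simp [sum_mupB_mul_prod_selectWeight]
    _ = ∑ x, mupB p x * ∑ z ∈ A, ∏ i, selectWeight (x i) (z i) := by
        rw [sum_comm]
        simp_rw [mul_sum]
    _ ≤ ∑ x, mupB p x * if x ∈ upClosure (tildeEmb A) then 1 else 0 :=
        sum_le_sum fun x _ => mul_le_mul_of_nonneg_left
          (sum_prod_selectWeight_le_indicator A x) (mupB_nonneg h0 h1 x)
    _ = muSet p (upClosure (tildeEmb A)) := by
        simp [muSet]

end Embedding

theorem exp_neg_mul_log_four_le_one_sub {t : ℝ} (h0 : 0 ≤ t) (h1 : t ≤ 1 / 2) :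
    exp (-(t * log 4)) ≤ 1 - t := by
  have hlog : log 4 = 2 * log 2 := by
    rw [show (4 : ℝ) = 2 ^ 2 by norm_num, log_pow]; norm_num
  have hconv := convexOn_exp.2 (Set.mem_univ 0) (Set.mem_univ (-log 2))
    (by linarith : 0 ≤ 1 - 2 * t) (by linarith : 0 ≤ 2 * t) (by ring)
  simp only [smul_eq_mul, mul_zero, zero_add, exp_zero, mul_one, exp_neg,
    exp_log two_pos] at hconv
  calc exp (-(t * log 4)) = exp (2 * t * -log 2) := by rw [hlog]; ring_nf
    _ ≤ 1 - 2 * t + 2 * t * 2⁻¹ := hconv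
    _ = 1 - t := by ring

theorem quarter_le_one_sub_inv_pow {n : ℕ} (hn : 2 ≤ n) :
    1 / 4 ≤ (1 - (n : ℝ)⁻¹) ^ n := by
  have hn0 : (0 : ℝ) < n := by positivity
  have hinv : (n : ℝ)⁻¹ ≤ 1 / 2 := by
    rw [inv_le_comm₀ hn0 (by norm_num), one_div, inv_inv]
    exact_mod_cast hn
  calc (1 : ℝ) / 4 = exp (-((n : ℝ)⁻¹ * log 4)) ^ n := by
        rw [← exp_nat_mul, mul_neg, ← mul_assoc, mul_inv_cancel₀ hn0.ne', one_mul, exp_neg,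
          exp_log (by norm_num), one_div]
    _ ≤ (1 - (n : ℝ)⁻¹) ^ n :=
        pow_le_pow_left₀ (exp_pos _).le
          (exp_neg_mul_log_four_le_one_sub (inv_nonneg.2 hn0.le) hinv) n

/-- For `k, n ≥ 2` and `p = log n / k ≤ 1`: `(1 - (1-p)^k)^n ≥ 1/4`, and consequently
`|𝒜|/k^n ≤ 4 μ_p(ℬ)` for every `𝒜 ⊆ [k]^n` with up-closed embedding `ℬ`. -/
theorem embedding_measure_bound_four (k n : ℕ) (hk : 2 ≤ k) (hn : 2 ≤ n)
    (hp1 : Real.log n / k ≤ 1) :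
    (1 : ℝ) / 4 ≤ (1 - (1 - Real.log n / k) ^ k) ^ n ∧
    ∀ A : Finset (Fin n → Fin k),
      (A.card : ℝ) / k ^ n ≤ 4 * muSet (Real.log n / k) (upClosure (tildeEmb A)) := by
  have hk0 : (0 : ℝ) < k := by positivity
  have hn0 : (0 : ℝ) < n := by positivity
  have hsmall : (1 - log n / k) ^ k ≤ (n : ℝ)⁻¹ := by
    simpa [exp_neg, exp_log hn0] using
      one_sub_div_pow_le_exp_neg ((div_le_one hk0).1 hp1)
  have hquarter : (1 : ℝ) / 4 ≤ (1 - (1 - log n / k) ^ k) ^ n :=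
    (quarter_le_one_sub_inv_pow hn).trans <| pow_le_pow_left₀
      (sub_nonneg.2 (inv_le_one_of_one_le₀ (by exact_mod_cast (by omega : 1 ≤ n))))
      (sub_le_sub_left hsmall 1) n
  refine ⟨hquarter, fun A => ?_⟩
  have hcoupling := card_mul_le_muSet (div_nonneg (log_natCast_nonneg n) hk0.le) hp1 A
  calc (#A : ℝ) / k ^ n = 4 * (#A / k ^ n * (1 / 4)) := by ring
    _ ≤ 4 * (#A / k ^ n * (1 - (1 - log n / k) ^ k) ^ n) := by gcongr
    _ = 4 * (#A * ((1 - (1 - log n / k) ^ k) / k) ^ n) := by rw [div_pow]; ring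
    _ ≤ 4 * muSet (log n / k) (upClosure (tildeEmb A)) := by gcongr
end
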